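/- Let ν ≥ 1 be an integer. For every real p₁ with 0 < p₁ < 2^{−ν}, there exist an integer n ≥ 2 and a source p on {1,…,n} with p(1) = p₁ such that every codeword-length vector l ∈ ℒ_n with R*(l,p) = R*_opt(p) has l(1) > ν. In particular, for 2^{−ν−1} < p₁ < 2^{−ν} one may take n = 2^{ν+1} and p = (p₁, 2^{−ν−1}, …, 2^{−ν−1}, 2^{−ν} − p₁) (with n − 2 middle entries equal to 2^{−ν−1}), and for p₁ = 2^{−ν−1} one may take the uniform distribution on 2^{ν+1} symbols. -/

import Mathlib

/-- A source: a positive, monotonically nonincreasing probability mass function on `Fin n`. -/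
def IsSource (n : ℕ) (p : Fin n → ℝ) : Prop :=
  (∀ i, 0 < p i) ∧ (∑ i, p i = 1) ∧ (∀ i j : Fin n, i ≤ j → p j ≤ p i)

/-- A codeword-length vector: positive integer lengths satisfying the Kraft inequality. -/
def IsCLV (n : ℕ) (l : Fin n → ℤ) : Prop :=
  (∀ i, 1 ≤ l i) ∧ (∑ i, (2:ℝ) ^ (-(l i)) ≤ 1)

/-- Maximum pointwise redundancy `R*(l,p) = max_i (l(i) + lg p(i))`. -/
noncomputable def Rstar (n : ℕ) (l : Fin n → ℤ) (p : Fin n → ℝ) : ℝ :=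
  ⨆ i : Fin n, ((l i : ℝ) + Real.logb 2 (p i))

/-- Minimum maximum pointwise redundancy over all codeword-length vectors. -/
noncomputable def RstarOpt (n : ℕ) (p : Fin n → ℝ) : ℝ :=
  sInf {r : ℝ | ∃ l : Fin n → ℤ, IsCLV n l ∧ Rstar n l p = r}

/-!
On `2^(μ+1)` symbols with every probability below `2^(-μ)`, the constant code of length `μ + 1`
has maximum pointwise redundancy below `1`, hence so does every optimal code. If an optimal code
gave the first symbol length at most `μ`, Kraft's inequality would force some symbol of
probability `2^(-μ-1)` in the middle of the padded source `(p₁, 2^(-μ-1), …, 2^(-μ-1), 2^(-μ) - p₁)`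
to have length at least `μ + 2`, i.e. pointwise redundancy at least `1`. For an arbitrary
`p₁ < 2^(-ν)` choose `μ ≥ ν` with `2^(-μ-1) ≤ p₁ < 2^(-μ)`.
-/

open Finset

lemma logb_two_zpow (z : ℤ) : Real.logb 2 ((2 : ℝ) ^ z) = z := by
  rw [← Real.rpow_intCast, Real.logb_rpow two_pos (by norm_num)]

lemma two_mul_two_zpow_sub_one (z : ℤ) : 2 * (2 : ℝ) ^ (z - 1) = 2 ^ z := by
  rw [zpow_sub_one₀ two_ne_zero]; ring

lemma two_pow_succ_mul_two_zpow (μ : ℕ) : (2 : ℝ) ^ (μ + 1) * 2 ^ (-(μ : ℤ) - 1) = 1 := by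
  rw [← zpow_natCast, ← zpow_add₀ two_ne_zero]; simp

section Redundancy

variable {n : ℕ}

lemma le_Rstar (l : Fin n → ℤ) (p : Fin n → ℝ) (i : Fin n) :
    (l i : ℝ) + Real.logb 2 (p i) ≤ Rstar n l p :=
  le_ciSup (f := fun i => (l i : ℝ) + Real.logb 2 (p i)) (Set.finite_range _).bddAbove i

lemma RstarOpt_le_Rstar [NeZero n] {l : Fin n → ℤ} (hl : IsCLV n l) (p : Fin n → ℝ) :
    RstarOpt n p ≤ Rstar n l p := by
  refine csInf_le ⟨1 + Real.logb 2 (p 0), ?_⟩ ⟨l, hl, rfl⟩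
  rintro _ ⟨l', hl', rfl⟩
  have h1 : (1 : ℝ) ≤ l' 0 := by exact_mod_cast hl'.1 0
  linarith [le_Rstar l' p 0]

lemma RstarOpt_lt_one [NeZero n] {m : ℕ} (hn : n ≤ 2 ^ (m + 1)) {p : Fin n → ℝ}
    (hpos : ∀ i, 0 < p i) (hp : ∀ i, p i < (2 : ℝ) ^ (-(m : ℤ))) :
    RstarOpt n p < 1 := by
  have hclv : IsCLV n fun _ => (m : ℤ) + 1 := by
    refine ⟨fun _ => by simp, ?_⟩
    rw [sum_const, card_univ, Fintype.card_fin, nsmul_eq_mul, neg_add',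
      ← two_pow_succ_mul_two_zpow m]
    gcongr
    exact_mod_cast hn
  obtain ⟨i, hi⟩ :=
    exists_eq_ciSup_of_finite (f := fun i => (((m : ℤ) + 1 : ℤ) : ℝ) + Real.logb 2 (p i))
  have hlog : Real.logb 2 (p i) < -m := by
    have := Real.logb_lt_logb one_lt_two (hpos i) (hp i)
    rwa [logb_two_zpow, Int.cast_neg, Int.cast_natCast] at this
  calc RstarOpt n p ≤ Rstar n (fun _ => (m : ℤ) + 1) p := RstarOpt_le_Rstar hclv p
    _ < 1 := by
      rw [Rstar, ← hi]
      push_cast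
      linarith

end Redundancy

/-- Giving `i₀` weight `2 * 2^(-μ-1)` and every other symbol but `j` weight `2^(-μ-1)` already
exhausts the Kraft budget, so `2^(-l j) > 0` overflows it. -/
lemma exists_length_ge_of_kraft {n : ℕ} {l : Fin n → ℤ} (hl : ∑ i, (2 : ℝ) ^ (-l i) ≤ 1)
    {μ : ℕ} (hn : 2 ^ (μ + 1) ≤ n) {i₀ j : Fin n} (hij : i₀ ≠ j) (h₀ : l i₀ ≤ μ) :
    ∃ i, i ≠ i₀ ∧ i ≠ j ∧ (μ : ℤ) + 2 ≤ l i := by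
  by_contra! h
  set q : ℝ := (2 : ℝ) ^ (-(μ : ℤ) - 1)
  have hq : ∀ i ≠ j, 0 ≤ (2 : ℝ) ^ (-l i) - q := by
    intro i hij
    rw [sub_nonneg]
    apply zpow_le_zpow_right₀ one_le_two
    by_cases hi : i = i₀
    · subst hi; omega
    · have := h i hi hij; omega
  have h₀q : 2 * q ≤ (2 : ℝ) ^ (-l i₀) := by
    rw [two_mul_two_zpow_sub_one]
    exact zpow_le_zpow_right₀ one_le_two (by omega)
  have hsum : (2 : ℝ) ^ (-l i₀) - q ≤ ∑ i ∈ univ.erase j, ((2 : ℝ) ^ (-l i) - q) :=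
    single_le_sum (fun i hi => hq i (ne_of_mem_erase hi)) (mem_erase.2 ⟨hij, mem_univ _⟩)
  rw [sum_sub_distrib, sum_const, card_erase_of_mem (mem_univ _), card_univ, Fintype.card_fin,
    nsmul_eq_mul, Nat.cast_pred (by have := Nat.one_le_two_pow (n := μ + 1); omega)] at hsum
  have hnq : 1 ≤ (n : ℝ) * q := by
    rw [← two_pow_succ_mul_two_zpow μ]
    gcongr
    exact_mod_cast hn
  rw [← add_sum_erase _ _ (mem_univ j)] at hl
  have := zpow_pos (two_pos (α := ℝ)) (-l j)
  linarith

def firstIdx (μ : ℕ) : Fin (2 ^ (μ + 1)) := ⟨0, Nat.two_pow_pos (μ + 1)⟩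

def lastIdx (μ : ℕ) : Fin (2 ^ (μ + 1)) :=
  ⟨2 ^ (μ + 1) - 1, Nat.sub_lt (Nat.two_pow_pos (μ + 1)) one_pos⟩

lemma firstIdx_ne_lastIdx (μ : ℕ) : firstIdx μ ≠ lastIdx μ := by
  have := Nat.one_lt_two_pow_iff (n := μ + 1) |>.2 (by omega)
  simp only [firstIdx, lastIdx, ne_eq, Fin.mk.injEq]
  omega

lemma eq_firstIdx_or_middle_or_eq_lastIdx {μ : ℕ} (i : Fin (2 ^ (μ + 1))) :
    i = firstIdx μ ∨ (0 < i.val ∧ i.val < 2 ^ (μ + 1) - 1) ∨ i = lastIdx μ := by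
  simp only [Fin.ext_iff, firstIdx, lastIdx]
  omega

lemma middle_of_ne {μ : ℕ} {i : Fin (2 ^ (μ + 1))} (h₀ : i ≠ firstIdx μ) (h₁ : i ≠ lastIdx μ) :
    0 < i.val ∧ i.val < 2 ^ (μ + 1) - 1 := by
  simp only [ne_eq, Fin.ext_iff, firstIdx, lastIdx] at h₀ h₁
  omega

/-- The source `(p₁, 2^(-μ-1), …, 2^(-μ-1), 2^(-μ) - p₁)` on `2^(μ+1)` symbols. -/
structure IsPaddedSource (μ : ℕ) (p₁ : ℝ) (p : Fin (2 ^ (μ + 1)) → ℝ) : Prop where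
  first : p (firstIdx μ) = p₁
  middle : ∀ i : Fin (2 ^ (μ + 1)), 0 < i.val → i.val < 2 ^ (μ + 1) - 1 →
    p i = (2 : ℝ) ^ (-(μ : ℤ) - 1)
  last : p (lastIdx μ) = (2 : ℝ) ^ (-(μ : ℤ)) - p₁

namespace IsPaddedSource

variable {μ : ℕ} {p₁ : ℝ} {p : Fin (2 ^ (μ + 1)) → ℝ}

lemma sum_eq_one (h : IsPaddedSource μ p₁ p) : ∑ i, p i = 1 := by
  set q : ℝ := (2 : ℝ) ^ (-(μ : ℤ) - 1)
  have hdev : ∑ i, (p i - q) = 0 := by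
    rw [Fintype.sum_eq_add _ _ (firstIdx_ne_lastIdx μ), h.first, h.last,
      ← two_mul_two_zpow_sub_one]
    · ring
    · intro i ⟨hi₀, hi₁⟩
      obtain ⟨hi, hi'⟩ := middle_of_ne hi₀ hi₁
      rw [h.middle i hi hi', sub_self]
  rw [sum_sub_distrib, sum_const, card_univ, Fintype.card_fin, nsmul_eq_mul, Nat.cast_pow,
    Nat.cast_ofNat, two_pow_succ_mul_two_zpow, sub_eq_zero] at hdev
  exact hdev

lemma le_middle (h : IsPaddedSource μ p₁ p) (hlo : (2 : ℝ) ^ (-(μ : ℤ) - 1) ≤ p₁)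
    {i : Fin (2 ^ (μ + 1))} (hi : i ≠ firstIdx μ) :
    p i ≤ (2 : ℝ) ^ (-(μ : ℤ) - 1) := by
  rcases eq_firstIdx_or_middle_or_eq_lastIdx i with hi' | ⟨hi', hi''⟩ | rfl
  · exact absurd hi' hi
  · exact (h.middle i hi' hi'').le
  · rw [h.last, ← two_mul_two_zpow_sub_one]; linarith

lemma le_first (h : IsPaddedSource μ p₁ p) (hlo : (2 : ℝ) ^ (-(μ : ℤ) - 1) ≤ p₁)
    (i : Fin (2 ^ (μ + 1))) : p i ≤ p₁ := by
  by_cases hi : i = firstIdx μ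
  · rw [hi, h.first]
  · exact (h.le_middle hlo hi).trans hlo

lemma isSource (h : IsPaddedSource μ p₁ p) (hlo : (2 : ℝ) ^ (-(μ : ℤ) - 1) ≤ p₁)
    (hhi : p₁ < (2 : ℝ) ^ (-(μ : ℤ))) :
    IsSource (2 ^ (μ + 1)) p := by
  refine ⟨fun i => ?_, h.sum_eq_one, fun i j hij => ?_⟩
  · rcases eq_firstIdx_or_middle_or_eq_lastIdx i with rfl | ⟨hi, hi'⟩ | rfl
    · rw [h.first]; exact (zpow_pos two_pos _).trans_le hlo
    · rw [h.middle i hi hi']; exact zpow_pos two_pos _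
    · rw [h.last]; linarith
  · rw [Fin.le_def] at hij
    rcases eq_firstIdx_or_middle_or_eq_lastIdx i with rfl | ⟨hi, hi'⟩ | rfl
    · rw [h.first]; exact h.le_first hlo j
    · rw [h.middle i hi hi']
      exact h.le_middle hlo fun hj => (hi.trans_le hij).ne' (by rw [hj]; rfl)
    · rw [show j = lastIdx μ by simp only [Fin.ext_iff, lastIdx] at hij ⊢; omega]

lemma lt_length_first (h : IsPaddedSource μ p₁ p) (hlo : (2 : ℝ) ^ (-(μ : ℤ) - 1) ≤ p₁)
    (hhi : p₁ < (2 : ℝ) ^ (-(μ : ℤ))) {l : Fin (2 ^ (μ + 1)) → ℤ} (hl : IsCLV (2 ^ (μ + 1)) l)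
    (hopt : Rstar (2 ^ (μ + 1)) l p = RstarOpt (2 ^ (μ + 1)) p) :
    (μ : ℤ) < l (firstIdx μ) := by
  by_contra! h₀
  obtain ⟨i, hi₀, hi₁, hli⟩ := exists_length_ge_of_kraft hl.2 le_rfl (firstIdx_ne_lastIdx μ) h₀
  obtain ⟨hi, hi'⟩ := middle_of_ne hi₀ hi₁
  have hR : 1 ≤ Rstar (2 ^ (μ + 1)) l p := by
    refine le_trans ?_ (le_Rstar l p i)
    rw [h.middle i hi hi', logb_two_zpow]
    have : (μ : ℝ) + 2 ≤ l i := by exact_mod_cast hli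
    push_cast
    linarith
  have hopt_lt := RstarOpt_lt_one (m := μ) le_rfl (h.isSource hlo hhi).1
    fun i => (h.le_first hlo i).trans_lt hhi
  linarith

end IsPaddedSource

lemma exists_two_zpow_bracket {x : ℝ} (hx : 0 < x) {ν : ℕ} (hxν : x < (2 : ℝ) ^ (-(ν : ℤ))) :
    ∃ μ : ℕ, ν ≤ μ ∧ (2 : ℝ) ^ (-(μ : ℤ) - 1) ≤ x ∧ x < (2 : ℝ) ^ (-(μ : ℤ)) := by
  set k := Int.log 2 x
  have hk : (2 : ℝ) ^ k ≤ x := by exact_mod_cast Int.zpow_log_le_self one_lt_two hx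
  have hk' : x < (2 : ℝ) ^ (k + 1) := by exact_mod_cast Int.lt_zpow_succ_log_self one_lt_two x
  have hkν : k < -ν := (zpow_lt_zpow_iff_right₀ one_lt_two).1 (hk.trans_lt hxν)
  refine ⟨(-(k + 1)).toNat, by omega, ?_⟩
  rw [Int.toNat_of_nonneg (by omega)]
  ring_nf at hk hk' ⊢
  exact ⟨hk, hk'⟩

noncomputable def paddedSource (μ : ℕ) (p₁ : ℝ) (i : Fin (2 ^ (μ + 1))) : ℝ :=
  if i = firstIdx μ then p₁
  else if i = lastIdx μ then (2 : ℝ) ^ (-(μ : ℤ)) - p₁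
  else (2 : ℝ) ^ (-(μ : ℤ) - 1)

lemma isPaddedSource_paddedSource (μ : ℕ) (p₁ : ℝ) :
    IsPaddedSource μ p₁ (paddedSource μ p₁) where
  first := if_pos rfl
  middle i hi hi' := by
    rw [paddedSource, if_neg, if_neg] <;> simp only [Fin.ext_iff, firstIdx, lastIdx] <;> omega
  last := by rw [paddedSource, if_neg (firstIdx_ne_lastIdx μ).symm, if_pos rfl]

theorem stmt16 (ν : ℕ) :
    (∀ p₁ : ℝ, 0 < p₁ → p₁ < (2:ℝ) ^ (-(ν:ℤ)) →
      ∃ (n : ℕ) (hn : 2 ≤ n) (p : Fin n → ℝ), IsSource n p ∧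
        p ⟨0, by omega⟩ = p₁ ∧
        ∀ l : Fin n → ℤ, IsCLV n l → Rstar n l p = RstarOpt n p →
          (ν:ℤ) < l ⟨0, by omega⟩) ∧
    (∀ p₁ : ℝ, (2:ℝ) ^ (-(ν:ℤ) - 1) < p₁ → p₁ < (2:ℝ) ^ (-(ν:ℤ)) →
      ∀ p : Fin (2 ^ (ν + 1)) → ℝ,
        p ⟨0, Nat.two_pow_pos (ν + 1)⟩ = p₁ →
        (∀ i : Fin (2 ^ (ν + 1)), 0 < i.val → i.val < 2 ^ (ν + 1) - 1 →
          p i = (2:ℝ) ^ (-(ν:ℤ) - 1)) →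
        p ⟨2 ^ (ν + 1) - 1, by have := Nat.two_pow_pos (ν + 1); omega⟩ =
          (2:ℝ) ^ (-(ν:ℤ)) - p₁ →
        IsSource (2 ^ (ν + 1)) p ∧
          ∀ l : Fin (2 ^ (ν + 1)) → ℤ, IsCLV (2 ^ (ν + 1)) l →
            Rstar (2 ^ (ν + 1)) l p = RstarOpt (2 ^ (ν + 1)) p →
            (ν:ℤ) < l ⟨0, Nat.two_pow_pos (ν + 1)⟩) ∧
    (∀ p : Fin (2 ^ (ν + 1)) → ℝ, (∀ i, p i = (2:ℝ) ^ (-(ν:ℤ) - 1)) →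
      ∀ l : Fin (2 ^ (ν + 1)) → ℤ, IsCLV (2 ^ (ν + 1)) l →
        Rstar (2 ^ (ν + 1)) l p = RstarOpt (2 ^ (ν + 1)) p →
        (ν:ℤ) < l ⟨0, Nat.two_pow_pos (ν + 1)⟩) := by
  refine ⟨fun p₁ hp₁ hp₁ν => ?_, fun p₁ hlo hhi p h₀ hmid hlast => ?_, fun p hp l hl hopt => ?_⟩
  · obtain ⟨μ, hνμ, hlo, hhi⟩ := exists_two_zpow_bracket hp₁ hp₁ν
    have h := isPaddedSource_paddedSource μ p₁
    refine ⟨2 ^ (μ + 1), Nat.le_self_pow (by omega) 2, paddedSource μ p₁, h.isSource hlo hhi,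
      h.first, fun l hl hopt => ?_⟩
    have : (ν : ℤ) ≤ μ := by exact_mod_cast hνμ
    exact this.trans_lt (h.lt_length_first hlo hhi hl hopt)
  · have h : IsPaddedSource ν p₁ p := ⟨h₀, hmid, hlast⟩
    exact ⟨h.isSource hlo.le hhi, fun l hl hopt => h.lt_length_first hlo.le hhi hl hopt⟩
  · have h : IsPaddedSource ν ((2 : ℝ) ^ (-(ν : ℤ) - 1)) p :=
      ⟨hp _, fun i _ _ => hp i, by rw [hp, eq_sub_iff_add_eq, ← two_mul, two_mul_two_zpow_sub_one]⟩
    exact h.lt_length_first le_rfl (zpow_lt_zpow_right₀ one_lt_two (by omega)) hl hopt
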